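/- arXiv:2312.04950 — 2 statements merged into one kernel-verified Lean document; each statement's English description precedes it below -/
import Mathlib

section
/- Let X_1,…,X_n be an IID bounded sequence with constants c_1, δ_1, c_2, δ_2 (c_1, c_2 > 0) and IID bounding sequence Y_1,…,Y_n, and suppose the values X_1,…,X_n are pairwise distinct and the values Y_1,…,Y_n are pairwise distinct. Then for every α ∈ (0,1) with n·α ∈ ℕ, the empirical lower quantile functions satisfy c_1·Q̂⁻_{Y_n}(α) + δ_1 ≤ Q̂⁻_{X_n}(α) ≤ c_2·Q̂⁻_{Y_n}(α) + δ_2. -/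
/-! The comparison holds pointwise in ω: the empirical lower quantile is monotone in the sample and
commutes with increasing affine maps, so the almost-sure coupling bounds on the observations pass
directly to the quantiles. -/

open MeasureTheory ProbabilityTheory

/-- Distribution function `F(x) = P(X ≤ x)` of a real random variable. -/
noncomputable def distFun {Ω : Type*} [MeasurableSpace Ω] (μ : Measure Ω) (X : Ω → ℝ) :
    ℝ → ℝ :=
  fun x => (μ {ω | X ω ≤ x}).toReal

/-- Upper quantile function `Q(p) = sup {x : F x ≤ p}`. -/
noncomputable def upperQuantile (F : ℝ → ℝ) (p : ℝ) : ℝ :=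
  sSup {x | F x ≤ p}

/-- Lower quantile function `Q⁻(p) = sup {x : F x < p}`. -/
noncomputable def lowerQuantile (F : ℝ → ℝ) (p : ℝ) : ℝ :=
  sSup {x | F x < p}

/-- Empirical distribution function of the observations `z 1, …, z i`. -/
noncomputable def empDistFun (z : ℕ → ℝ) (i : ℕ) : ℝ → ℝ :=
  fun x => (1 / (i : ℝ)) * ∑ j ∈ Finset.Icc 1 i, (if z j ≤ x then (1 : ℝ) else 0)

/-- The boundary `g_i = 0.85 √((1/i)(log log (e i) + 0.8 log (1612/δ)))`. -/
noncomputable def gBound (δ : ℝ) (i : ℕ) : ℝ :=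
  0.85 * Real.sqrt ((1 / (i : ℝ)) *
    (Real.log (Real.log (Real.exp 1 * i)) + 0.8 * Real.log (1612 / δ)))

open Finset

lemma empDistFun_comp_orderIso (e : ℝ ≃o ℝ) (z : ℕ → ℝ) (n : ℕ) (x : ℝ) :
    empDistFun (fun j => e (z j)) n x = empDistFun z n (e.symm x) := by
  simp only [empDistFun, ← e.le_symm_apply]

lemma empDistFun_antitone_sample {a b : ℕ → ℝ} {n : ℕ} (h : ∀ j ∈ Icc 1 n, a j ≤ b j) (x : ℝ) :
    empDistFun b n x ≤ empDistFun a n x := by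
  unfold empDistFun
  gcongr with j hj
  split_ifs with hb ha
  · rfl
  · exact absurd ((h j hj).trans hb) ha
  · exact zero_le_one
  · rfl

lemma empDistFun_eq_zero_of_forall_lt {z : ℕ → ℝ} {n : ℕ} {x : ℝ}
    (h : ∀ j ∈ Icc 1 n, x < z j) : empDistFun z n x = 0 := by
  unfold empDistFun
  rw [sum_eq_zero fun j hj => if_neg (h j hj).not_ge, mul_zero]

lemma empDistFun_eq_one_of_forall_le {z : ℕ → ℝ} {n : ℕ} (hn : 1 ≤ n) {x : ℝ}
    (h : ∀ j ∈ Icc 1 n, z j ≤ x) : empDistFun z n x = 1 := by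
  unfold empDistFun
  rw [sum_congr rfl fun j hj => if_pos (h j hj)]
  have : (n : ℝ) ≠ 0 := by positivity
  simp [this]

lemma nonempty_empDistFun_lt (z : ℕ → ℝ) (n : ℕ) {α : ℝ} (hα : 0 < α) :
    {x | empDistFun z n x < α}.Nonempty := by
  obtain ⟨m, hm⟩ := ((Icc 1 n).image z).bddBelow
  exact ⟨m - 1, (empDistFun_eq_zero_of_forall_lt fun j hj =>
    (sub_one_lt m).trans_le (hm (mem_coe.2 (mem_image_of_mem z hj)))).trans_lt hα⟩

lemma bddAbove_empDistFun_lt (z : ℕ → ℝ) {n : ℕ} (hn : 1 ≤ n) {α : ℝ} (hα : α < 1) :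
    BddAbove {x | empDistFun z n x < α} := by
  obtain ⟨M, hM⟩ := ((Icc 1 n).image z).bddAbove
  refine ⟨M, fun x hx => le_of_not_gt fun hMx => ?_⟩
  have h1 := empDistFun_eq_one_of_forall_le hn fun j hj =>
    (hM (mem_coe.2 (mem_image_of_mem z hj))).trans hMx.le
  exact hα.not_gt (h1 ▸ hx)

lemma lowerQuantile_le_of_le {F G : ℝ → ℝ} {p : ℝ} (hGF : ∀ x, G x ≤ F x)
    (hF : {x | F x < p}.Nonempty) (hG : BddAbove {x | G x < p}) :
    lowerQuantile F p ≤ lowerQuantile G p :=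
  csSup_le_csSup hG hF fun x hx => (hGF x).trans_lt hx

lemma lowerQuantile_comp_orderIso (e : ℝ ≃o ℝ) {F : ℝ → ℝ} {p : ℝ}
    (hF : {x | F x < p}.Nonempty) (hF' : BddAbove {x | F x < p}) :
    lowerQuantile (fun x => F (e.symm x)) p = e (lowerQuantile F p) := by
  rw [lowerQuantile, lowerQuantile, e.map_csSup' hF hF', e.image_eq_preimage_symm]
  rfl

lemma lowerQuantile_empDistFun_mono {n : ℕ} (hn : 1 ≤ n) {α : ℝ} (hα : α ∈ Set.Ioo (0 : ℝ) 1)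
    {a b : ℕ → ℝ} (h : ∀ j ∈ Icc 1 n, a j ≤ b j) :
    lowerQuantile (empDistFun a n) α ≤ lowerQuantile (empDistFun b n) α :=
  lowerQuantile_le_of_le (empDistFun_antitone_sample h) (nonempty_empDistFun_lt a n hα.1)
    (bddAbove_empDistFun_lt b hn hα.2)

lemma lowerQuantile_empDistFun_affine {n : ℕ} (hn : 1 ≤ n) {α : ℝ} (hα : α ∈ Set.Ioo (0 : ℝ) 1)
    (z : ℕ → ℝ) {c : ℝ} (hc : 0 < c) (d : ℝ) :
    lowerQuantile (empDistFun (fun j => c * z j + d) n) α =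
      c * lowerQuantile (empDistFun z n) α + d := by
  let e : ℝ ≃o ℝ := (OrderIso.mulLeft₀ c hc).trans (OrderIso.addRight d)
  have hz : empDistFun (fun j => c * z j + d) n = fun x => empDistFun z n (e.symm x) :=
    funext (empDistFun_comp_orderIso e z n)
  rw [hz, lowerQuantile_comp_orderIso e (nonempty_empDistFun_lt z n hα.1)
    (bddAbove_empDistFun_lt z hn hα.2)]
  rfl

theorem iidBounded_lowerQuantile_comparison_general
    {Ω : Type*} [MeasurableSpace Ω] (μ : Measure Ω)
    (X Y : ℕ → Ω → ℝ)
    (c₁ δ₁ c₂ δ₂ : ℝ) (hc₁ : 0 < c₁) (hc₂ : 0 < c₂)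
    (hbound : ∀ i, ∀ᵐ ω ∂μ, c₁ * Y i ω + δ₁ ≤ X i ω ∧ X i ω ≤ c₂ * Y i ω + δ₂)
    (n : ℕ) (hn : 1 ≤ n)
    (α : ℝ) (hα : α ∈ Set.Ioo (0 : ℝ) 1) :
    ∀ᵐ ω ∂μ,
      c₁ * lowerQuantile (empDistFun (fun j => Y j ω) n) α + δ₁ ≤
          lowerQuantile (empDistFun (fun j => X j ω) n) α ∧
        lowerQuantile (empDistFun (fun j => X j ω) n) α ≤
          c₂ * lowerQuantile (empDistFun (fun j => Y j ω) n) α + δ₂ := by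
  filter_upwards [ae_all_iff.2 hbound] with ω h
  rw [← lowerQuantile_empDistFun_affine hn hα _ hc₁,
    ← lowerQuantile_empDistFun_affine hn hα _ hc₂]
  exact ⟨lowerQuantile_empDistFun_mono hn hα fun j _ => (h j).1,
    lowerQuantile_empDistFun_mono hn hα fun j _ => (h j).2⟩

/-- Lemma `lem:quantile:essentialIID`, lower quantile part: for an IID bounded sequence
`X_1, …, X_n` with bounding sequence `Y_1, …, Y_n` (with pairwise distinct values), for every
`α ∈ (0,1)` with `n·α ∈ ℕ`,
`c₁ Q̂⁻_{Y_n}(α) + δ₁ ≤ Q̂⁻_{X_n}(α) ≤ c₂ Q̂⁻_{Y_n}(α) + δ₂` almost surely. -/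
theorem iidBounded_lowerQuantile_comparison
    {Ω : Type*} [MeasurableSpace Ω] (μ : Measure Ω) [IsProbabilityMeasure μ]
    (X Y : ℕ → Ω → ℝ) (hXmeas : ∀ i, Measurable (X i)) (hYmeas : ∀ i, Measurable (Y i))
    (c₁ δ₁ c₂ δ₂ : ℝ) (hc₁ : 0 < c₁) (hc₂ : 0 < c₂)
    (hXindep : iIndepFun X μ)
    (hYindep : iIndepFun Y μ)
    (hYident : ∀ i j, IdentDistrib (Y i) (Y j) μ μ)
    (hbound : ∀ i, ∀ᵐ ω ∂μ, c₁ * Y i ω + δ₁ ≤ X i ω ∧ X i ω ≤ c₂ * Y i ω + δ₂)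
    (n : ℕ) (hn : 1 ≤ n)
    (hXdistinct : ∀ᵐ ω ∂μ, ∀ i ∈ Finset.Icc 1 n, ∀ j ∈ Finset.Icc 1 n, i ≠ j → X i ω ≠ X j ω)
    (hYdistinct : ∀ᵐ ω ∂μ, ∀ i ∈ Finset.Icc 1 n, ∀ j ∈ Finset.Icc 1 n, i ≠ j → Y i ω ≠ Y j ω)
    (α : ℝ) (hα : α ∈ Set.Ioo (0 : ℝ) 1) (hnα : ∃ k : ℕ, (n : ℝ) * α = k) :
    ∀ᵐ ω ∂μ,
      c₁ * lowerQuantile (empDistFun (fun j => Y j ω) n) α + δ₁ ≤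
          lowerQuantile (empDistFun (fun j => X j ω) n) α ∧
        lowerQuantile (empDistFun (fun j => X j ω) n) α ≤
          c₂ * lowerQuantile (empDistFun (fun j => Y j ω) n) α + δ₂ :=
  iidBounded_lowerQuantile_comparison_general μ X Y c₁ δ₁ c₂ δ₂ hc₁ hc₂ hbound n hn α hα
end

section
/- Let X_1,…,X_n be an IID bounded sequence with constants c_1, δ_1, c_2, δ_2 (c_1, c_2 > 0) and IID bounding sequence Y_1,…,Y_n, and suppose the values X_1,…,X_n are pairwise distinct and the values Y_1,…,Y_n are pairwise distinct. Then for every α ∈ (0,1) and g ∈ ℝ such that n·(α/2 − g) ∈ ℕ and n·(1 − α/2 + g) ∈ ℕ with α/2 − g and 1 − α/2 + g in (0,1), the interval [Q̂_{Y_n}(α/2 − g), Q̂⁻_{Y_n}(1 − α/2 + g)] is contained in the interval [(Q̂_{X_n}(α/2 − g) − δ_2)/c_2, (Q̂⁻_{X_n}(1 − α/2 + g) − δ_1)/c_1]. -/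
open MeasureTheory ProbabilityTheory

/-! Almost surely `c₁ Yᵢ + δ₁ ≤ Xᵢ ≤ c₂ Yᵢ + δ₂` for all `i` at once, so the covering is a
deterministic statement about the samples. `Yᵢ ≤ (x - δ₂)/c₂` forces `Xᵢ ≤ x`, hence
`F̂_Y((x - δ₂)/c₂) ≤ F̂_X(x)` and the upper quantiles compare; symmetrically `Xᵢ ≤ c₁ y + δ₁`
forces `Yᵢ ≤ y`, which compares the lower quantiles. For `0 < p, q < 1` and `n ≥ 1` the sets
defining the quantiles are nonempty and bounded above, so the suprema are genuine. -/

section EmpDistFun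

variable (z w : ℕ → ℝ) {n : ℕ}

lemma empDistFun_le_of_imp {x y : ℝ} (h : ∀ j ∈ Finset.Icc 1 n, z j ≤ x → w j ≤ y) :
    empDistFun z n x ≤ empDistFun w n y := by
  refine mul_le_mul_of_nonneg_left (Finset.sum_le_sum fun j hj => ?_) (by positivity)
  split_ifs with hz hw <;> first | exact absurd (h j hj hz) hw | norm_num

lemma empDistFun_eq_zero_of_lt {x : ℝ} (hx : ∀ j ∈ Finset.Icc 1 n, x < z j) :
    empDistFun z n x = 0 :=
  mul_eq_zero_of_right _ (Finset.sum_eq_zero fun j hj => if_neg (hx j hj).not_ge)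

lemma empDistFun_eq_one_of_le (hn : 1 ≤ n) {x : ℝ} (hx : ∀ j ∈ Finset.Icc 1 n, z j ≤ x) :
    empDistFun z n x = 1 := by
  have hn₀ : (n : ℝ) ≠ 0 := by positivity
  simp only [empDistFun, Finset.sum_congr rfl fun j hj => if_pos (hx j hj), Finset.sum_const,
    Nat.card_Icc, Nat.add_sub_cancel, nsmul_eq_mul, mul_one]
  field_simp

lemma abs_le_sum_abs {j : ℕ} (hj : j ∈ Finset.Icc 1 n) : |z j| ≤ ∑ i ∈ Finset.Icc 1 n, |z i| :=
  Finset.single_le_sum (fun i _ => abs_nonneg (z i)) hj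

lemma exists_empDistFun_eq_zero : ∃ x, empDistFun z n x = 0 :=
  ⟨-∑ i ∈ Finset.Icc 1 n, |z i| - 1, empDistFun_eq_zero_of_lt z fun j hj => by
    linarith [abs_le_sum_abs z hj, neg_abs_le (z j)]⟩

lemma bddAbove_setOf_empDistFun_le (hn : 1 ≤ n) {p : ℝ} (hp : p < 1) :
    BddAbove {x | empDistFun z n x ≤ p} := by
  refine ⟨∑ i ∈ Finset.Icc 1 n, |z i|, fun x hx => not_lt.1 fun hlt => hp.not_ge ?_⟩
  rw [← empDistFun_eq_one_of_le z hn fun j hj => ?_]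
  · exact hx
  · linarith [abs_le_sum_abs z hj, le_abs_self (z j)]

lemma bddAbove_setOf_empDistFun_lt (hn : 1 ≤ n) {q : ℝ} (hq : q < 1) :
    BddAbove {x | empDistFun z n x < q} :=
  (bddAbove_setOf_empDistFun_le z hn hq).mono fun x (hx : empDistFun z n x < q) => hx.le

variable {z w} {c δ : ℝ}

lemma upperQuantile_empDistFun_sub_div_le (hn : 1 ≤ n) (hc : 0 < c) {p : ℝ} (hp₀ : 0 ≤ p)
    (hp₁ : p < 1) (hzw : ∀ j ∈ Finset.Icc 1 n, z j ≤ c * w j + δ) :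
    (upperQuantile (empDistFun z n) p - δ) / c ≤ upperQuantile (empDistFun w n) p := by
  obtain ⟨x₀, hx₀⟩ := exists_empDistFun_eq_zero z (n := n)
  rw [div_le_iff₀ hc, sub_le_iff_le_add]
  refine csSup_le ⟨x₀, hx₀.trans_le hp₀⟩ fun x (hx : empDistFun z n x ≤ p) => ?_
  have hw : empDistFun w n ((x - δ) / c) ≤ p := by
    refine (empDistFun_le_of_imp w z fun j hj hwx => ?_).trans hx
    rw [le_div_iff₀ hc] at hwx
    linarith [hzw j hj]
  have hle : (x - δ) / c ≤ upperQuantile (empDistFun w n) p :=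
    le_csSup (bddAbove_setOf_empDistFun_le w hn hp₁) hw
  rwa [div_le_iff₀ hc, sub_le_iff_le_add] at hle

lemma lowerQuantile_empDistFun_le_sub_div (hn : 1 ≤ n) (hc : 0 < c) {q : ℝ} (hq₀ : 0 < q)
    (hq₁ : q < 1) (hwz : ∀ j ∈ Finset.Icc 1 n, c * w j + δ ≤ z j) :
    lowerQuantile (empDistFun w n) q ≤ (lowerQuantile (empDistFun z n) q - δ) / c := by
  obtain ⟨y₀, hy₀⟩ := exists_empDistFun_eq_zero w (n := n)
  refine csSup_le ⟨y₀, hy₀.trans_lt hq₀⟩ fun y (hy : empDistFun w n y < q) => ?_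
  have hz : empDistFun z n (c * y + δ) < q :=
    (empDistFun_le_of_imp z w fun j hj hzy =>
      le_of_mul_le_mul_left (by linarith [hwz j hj]) hc).trans_lt hy
  have hle : c * y + δ ≤ lowerQuantile (empDistFun z n) q :=
    le_csSup (bddAbove_setOf_empDistFun_lt z hn hq₁) hz
  rwa [le_div_iff₀' hc, le_sub_iff_add_le]

end EmpDistFun

theorem iidBounded_interval_covering_general
    {Ω : Type*} [MeasurableSpace Ω] (μ : Measure Ω)
    (X Y : ℕ → Ω → ℝ)
    (c₁ δ₁ c₂ δ₂ : ℝ) (hc₁ : 0 < c₁) (hc₂ : 0 < c₂)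
    (hbound : ∀ i, ∀ᵐ ω ∂μ, c₁ * Y i ω + δ₁ ≤ X i ω ∧ X i ω ≤ c₂ * Y i ω + δ₂)
    (n : ℕ) (hn : 1 ≤ n)
    (α g : ℝ)
    (hlo : α / 2 - g ∈ Set.Ioo (0 : ℝ) 1) (hhi : 1 - α / 2 + g ∈ Set.Ioo (0 : ℝ) 1) :
    ∀ᵐ ω ∂μ,
      Set.Icc (upperQuantile (empDistFun (fun j => Y j ω) n) (α / 2 - g))
          (lowerQuantile (empDistFun (fun j => Y j ω) n) (1 - α / 2 + g)) ⊆
        Set.Icc ((upperQuantile (empDistFun (fun j => X j ω) n) (α / 2 - g) - δ₂) / c₂)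
          ((lowerQuantile (empDistFun (fun j => X j ω) n) (1 - α / 2 + g) - δ₁) / c₁) := by
  filter_upwards [ae_all_iff.2 hbound] with ω hω
  exact Set.Icc_subset_Icc
    (upperQuantile_empDistFun_sub_div_le hn hc₂ hlo.1.le hlo.2 fun j _ => (hω j).2)
    (lowerQuantile_empDistFun_le_sub_div hn hc₁ hhi.1 hhi.2 fun j _ => (hω j).1)

/-- The covering step in the proof of Theorem `thm:essentialIID`: the interval
`[Q̂_{Y_n}(α/2 - g), Q̂⁻_{Y_n}(1 - α/2 + g)]` is contained in the observable interval
`[(Q̂_{X_n}(α/2 - g) - δ₂)/c₂, (Q̂⁻_{X_n}(1 - α/2 + g) - δ₁)/c₁]` almost surely. -/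
theorem iidBounded_interval_covering
    {Ω : Type*} [MeasurableSpace Ω] (μ : Measure Ω) [IsProbabilityMeasure μ]
    (X Y : ℕ → Ω → ℝ) (hXmeas : ∀ i, Measurable (X i)) (hYmeas : ∀ i, Measurable (Y i))
    (c₁ δ₁ c₂ δ₂ : ℝ) (hc₁ : 0 < c₁) (hc₂ : 0 < c₂)
    (hXindep : iIndepFun X μ)
    (hYindep : iIndepFun Y μ)
    (hYident : ∀ i j, IdentDistrib (Y i) (Y j) μ μ)
    (hbound : ∀ i, ∀ᵐ ω ∂μ, c₁ * Y i ω + δ₁ ≤ X i ω ∧ X i ω ≤ c₂ * Y i ω + δ₂)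
    (n : ℕ) (hn : 1 ≤ n)
    (hXdistinct : ∀ᵐ ω ∂μ, ∀ i ∈ Finset.Icc 1 n, ∀ j ∈ Finset.Icc 1 n, i ≠ j → X i ω ≠ X j ω)
    (hYdistinct : ∀ᵐ ω ∂μ, ∀ i ∈ Finset.Icc 1 n, ∀ j ∈ Finset.Icc 1 n, i ≠ j → Y i ω ≠ Y j ω)
    (α g : ℝ) (hα : α ∈ Set.Ioo (0 : ℝ) 1)
    (hlo : α / 2 - g ∈ Set.Ioo (0 : ℝ) 1) (hhi : 1 - α / 2 + g ∈ Set.Ioo (0 : ℝ) 1)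
    (hnlo : ∃ k : ℕ, (n : ℝ) * (α / 2 - g) = k)
    (hnhi : ∃ k : ℕ, (n : ℝ) * (1 - α / 2 + g) = k) :
    ∀ᵐ ω ∂μ,
      Set.Icc (upperQuantile (empDistFun (fun j => Y j ω) n) (α / 2 - g))
          (lowerQuantile (empDistFun (fun j => Y j ω) n) (1 - α / 2 + g)) ⊆
        Set.Icc ((upperQuantile (empDistFun (fun j => X j ω) n) (α / 2 - g) - δ₂) / c₂)
          ((lowerQuantile (empDistFun (fun j => X j ω) n) (1 - α / 2 + g) - δ₁) / c₁) :=
  iidBounded_interval_covering_general μ X Y c₁ δ₁ c₂ δ₂ hc₁ hc₂ hbound n hn α g hlo hhi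
end
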